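/- arXiv:math/0101271 — 6 statements merged into one kernel-verified Lean document; each statement's English description precedes it below -/
import Mathlib

section
/- Let K be a number field with [K:ℚ] = 2 and let N be a positive integer. Assume that every prime number q dividing N splits in K, i.e. for each such q there exist two distinct prime ideals P ≠ P' of the ring of integers 𝒪_K with P * P' equal to the ideal generated by q. Then there exists an ideal 𝒩 ของ 𝒪_K such that the quotient ring 𝒪_K ⧸ 𝒩 is isomorphic, as a ring, to ℤ/Nℤ. -/
open NumberField

set_option synthInstance.maxHeartbeats 1000000 in
set_option maxHeartbeats 2000000 in
/-- Quotient by a power of a split prime is `ZMod (q^e)`. -/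
lemma aux_primepow (K : Type*) [Field K] [NumberField K]
    (hdeg : Module.finrank ℚ K = 2) (q : ℕ) (hq : q.Prime)
    (P P' : Ideal (𝓞 K)) (hne : P ≠ P') (hP : P.IsPrime) (hP' : P'.IsPrime)
    (hPP' : P * P' = Ideal.span {(q : 𝓞 K)}) (e : ℕ) :
    Nonempty ((𝓞 K ⧸ P ^ e) ≃+* ZMod (q ^ e)) := by
  haveI : Fact q.Prime := ⟨hq⟩
  haveI : NeZero q := ⟨hq.ne_zero⟩
  have hq0 : (q : 𝓞 K) ≠ 0 := Nat.cast_ne_zero.mpr hq.ne_zero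
  -- the norm of the principal ideal (q) is q^2
  have hnq : Ideal.absNorm (Ideal.span {(q : 𝓞 K)}) = q ^ 2 := by
    rw [Ideal.absNorm_span_singleton]
    have hcast : (q : 𝓞 K) = algebraMap ℤ (𝓞 K) (q : ℤ) :=
      (map_natCast (algebraMap ℤ (𝓞 K)) q).symm
    let b := Module.Free.chooseBasis ℤ (𝓞 K)
    rw [hcast, Algebra.norm_algebraMap_of_basis b]
    rw [← Module.finrank_eq_card_chooseBasisIndex, NumberField.RingOfIntegers.rank, hdeg]
    simp [Int.natAbs_pow]
  -- P and P' are nonzero, hence maximal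
  have hspan_ne : Ideal.span {(q : 𝓞 K)} ≠ ⊥ := by
    simpa [Ideal.span_singleton_eq_bot] using hq0
  have hPbot : P ≠ ⊥ := by
    intro h; apply hspan_ne; rw [← hPP', h, Ideal.bot_mul]
  have hP'bot : P' ≠ ⊥ := by
    intro h; apply hspan_ne; rw [← hPP', h, Ideal.mul_bot]
  have hPmax : P.IsMaximal := hP.isMaximal hPbot
  have hP'max : P'.IsMaximal := hP'.isMaximal hP'bot
  -- absNorm P = q
  have hmul : Ideal.absNorm P * Ideal.absNorm P' = q ^ 2 := by
    rw [← map_mul, hPP', hnq]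
  have h1 : Ideal.absNorm P ≠ 1 := by
    rw [Ne, Ideal.absNorm_eq_one_iff]; exact hPmax.ne_top
  have h1' : Ideal.absNorm P' ≠ 1 := by
    rw [Ne, Ideal.absNorm_eq_one_iff]; exact hP'max.ne_top
  have hNP : Ideal.absNorm P = q := by
    obtain ⟨i, hi, ha⟩ := (Nat.dvd_prime_pow hq).1 ⟨_, hmul.symm⟩
    interval_cases i
    · rw [pow_zero] at ha; exact absurd ha h1
    · simpa using ha
    · exfalso
      rw [ha] at hmul
      have : Ideal.absNorm P' = 1 := by
        have hq2 : (0 : ℕ) < q ^ 2 := pow_pos hq.pos 2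
        nlinarith [hmul]
      exact h1' this
  -- q ∈ P
  have hqP : (q : 𝓞 K) ∈ P := by
    have : Ideal.span {(q : 𝓞 K)} ≤ P := hPP' ▸ Ideal.mul_le_left
    exact this (Ideal.mem_span_singleton_self _)
  -- the quotient 𝓞 K ⧸ P is a field with q elements
  have hcard : Nat.card (𝓞 K ⧸ P) = q := by
    rw [← Submodule.cardQuot_apply, ← Ideal.absNorm_apply, hNP]
  haveI : Nontrivial (𝓞 K ⧸ P) := Ideal.Quotient.nontrivial_iff.mpr hPmax.ne_top
  have hchar0 : (q : 𝓞 K ⧸ P) = 0 := by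
    rw [← map_natCast (Ideal.Quotient.mk P), Ideal.Quotient.eq_zero_iff_mem]
    exact hqP
  haveI hcharP : CharP (𝓞 K ⧸ P) q := by
    apply ringChar.of_eq
    rcases (Nat.Prime.eq_one_or_self_of_dvd hq _ (ringChar.dvd hchar0)) with h | h
    · exact absurd h (CharP.char_ne_one (𝓞 K ⧸ P) (ringChar (𝓞 K ⧸ P)))
    · exact h
  haveI : Finite (𝓞 K ⧸ P) := Nat.finite_of_card_ne_zero (by rw [hcard]; exact hq.ne_zero)
  haveI : Fintype (𝓞 K ⧸ P) := Fintype.ofFinite _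
  -- the map ZMod q → 𝓞 K ⧸ P is bijective
  let φ : ZMod q →+* 𝓞 K ⧸ P := ZMod.castHom dvd_rfl _
  have hinj : Function.Injective φ := φ.injective
  have hsurjφ : Function.Surjective φ := by
    have hcards : Fintype.card (ZMod q) = Fintype.card (𝓞 K ⧸ P) := by
      rw [ZMod.card, ← Nat.card_eq_fintype_card, hcard]
    exact ((Fintype.bijective_iff_injective_and_card φ).2 ⟨hinj, hcards⟩).2
  -- base case of surjectivity: every element of 𝓞 K is an integer mod P
  have base : ∀ x : 𝓞 K, ∃ n : ℕ, x - n ∈ P := by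
    intro x
    obtain ⟨z, hz⟩ := hsurjφ (Ideal.Quotient.mk P x)
    obtain ⟨n, rfl⟩ := ZMod.natCast_zmod_surjective z
    refine ⟨n, ?_⟩
    rw [← Ideal.Quotient.eq_zero_iff_mem, map_sub, map_natCast]
    rw [← hz, map_natCast φ, sub_self]
  -- the key ideal identity P^e = P^(e+1) ⊔ (q^e)
  have hcop : IsCoprime P P' := (Ideal.isCoprime_iff_sup_eq).2
    (Ideal.IsMaximal.coprime_of_ne hPmax hP'max hne)
  have hpow : ∀ m : ℕ, P ^ m = P ^ (m + 1) ⊔ Ideal.span {(q : 𝓞 K) ^ m} := by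
    intro m
    have h1 : Ideal.span {(q : 𝓞 K) ^ m} = P ^ m * P' ^ m := by
      rw [← Ideal.span_singleton_pow, ← hPP', mul_pow]
    have htop : P ⊔ P' ^ m = ⊤ :=
      Ideal.isCoprime_iff_sup_eq.1 (hcop.pow_right)
    calc P ^ m = P ^ m * ⊤ := by rw [Ideal.mul_top]
      _ = P ^ m * (P ⊔ P' ^ m) := by rw [htop]
      _ = P ^ m * P ⊔ P ^ m * P' ^ m := Ideal.mul_sup _ _ _
      _ = P ^ (m + 1) ⊔ Ideal.span {(q : 𝓞 K) ^ m} := by rw [← pow_succ, h1]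
  -- surjectivity at level e
  have surj : ∀ m : ℕ, ∀ x : 𝓞 K, ∃ n : ℕ, x - n ∈ P ^ m := by
    intro m
    induction m with
    | zero => intro x; exact ⟨0, by simp⟩
    | succ m ihm =>
      intro x
      obtain ⟨n, hn⟩ := ihm x
      rw [hpow m] at hn
      obtain ⟨z, hz, t, ht, hzt⟩ := Submodule.mem_sup.1 hn
      obtain ⟨w, rfl⟩ := Ideal.mem_span_singleton.1 ht
      obtain ⟨k, hk⟩ := base w
      refine ⟨n + q ^ m * k, ?_⟩
      have heq : x - ↑(n + q ^ m * k) = z + (q : 𝓞 K) ^ m * (w - k) := by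
        push_cast
        linear_combination -hzt
      rw [heq]
      exact Ideal.add_mem _ hz
        (by
          have : (q : 𝓞 K) ^ m * (w - k) ∈ P ^ m * P :=
            Ideal.mul_mem_mul (Ideal.pow_mem_pow hqP m) hk
          rwa [← pow_succ] at this)
  -- the map ℤ → 𝓞 K ⧸ P^e is surjective
  let ψ : ℤ →+* 𝓞 K ⧸ P ^ e := (Ideal.Quotient.mk (P ^ e)).comp (Int.castRingHom (𝓞 K))
  have hsurjψ : Function.Surjective ψ := by
    intro y
    obtain ⟨x, rfl⟩ := Ideal.Quotient.mk_surjective y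
    obtain ⟨n, hn⟩ := surj e x
    refine ⟨(n : ℤ), ?_⟩
    have : Ideal.Quotient.mk (P ^ e) (x - n) = 0 := (Ideal.Quotient.eq_zero_iff_mem).2 hn
    rw [map_sub, sub_eq_zero] at this
    simp only [ψ, RingHom.comp_apply, eq_intCast, Int.cast_natCast]
    exact this.symm
  let E1 : ℤ ⧸ RingHom.ker ψ ≃+* 𝓞 K ⧸ P ^ e := RingHom.quotientKerEquivOfSurjective hsurjψ
  set g : ℤ := Submodule.IsPrincipal.generator (RingHom.ker ψ) with hgdef
  have hg : Ideal.span {g} = RingHom.ker ψ := Ideal.span_singleton_generator _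
  let E2 : ℤ ⧸ RingHom.ker ψ ≃+* ZMod g.natAbs :=
    (Ideal.quotEquivOfEq hg.symm).trans (Int.quotientSpanEquivZMod g)
  let E : (𝓞 K ⧸ P ^ e) ≃+* ZMod g.natAbs := E1.symm.trans E2
  have hcarde : Nat.card (𝓞 K ⧸ P ^ e) = q ^ e := by
    rw [← Submodule.cardQuot_apply, ← Ideal.absNorm_apply, map_pow, hNP]
  have hge : g.natAbs = q ^ e := by
    rw [← Nat.card_zmod g.natAbs, ← Nat.card_congr E.toEquiv]
    exact hcarde
  refine ⟨?_⟩
  rw [← hge]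
  exact E

set_option synthInstance.maxHeartbeats 1000000 in
set_option maxHeartbeats 2000000 in
/-- If every prime dividing `N` splits in the quadratic field `K`, then there is an
ideal `𝒩` of the ring of integers of `K` with `𝒪_K ⧸ 𝒩 ≃ ℤ/Nℤ`. -/
theorem stmt_0 (K : Type*) [Field K] [NumberField K]
    (hdeg : Module.finrank ℚ K = 2) (N : ℕ) (hN : 0 < N)
    (hsplit : ∀ q : ℕ, q.Prime → q ∣ N →
      ∃ P P' : Ideal (𝓞 K), P ≠ P' ∧ P.IsPrime ∧ P'.IsPrime ∧
        P * P' = Ideal.span {(q : 𝓞 K)}) :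
    ∃ 𝒩 : Ideal (𝓞 K), Nonempty ((𝓞 K ⧸ 𝒩) ≃+* ZMod N) := by
  induction N using Nat.strong_induction_on with
  | _ N ih =>
  rcases eq_or_lt_of_le (Nat.one_le_iff_ne_zero.2 hN.ne') with h1 | h1
  · -- N = 1
    subst h1
    refine ⟨⊤, ⟨?_⟩⟩
    haveI : Subsingleton (𝓞 K ⧸ (⊤ : Ideal (𝓞 K))) :=
      Ideal.Quotient.subsingleton_iff.2 rfl
    exact
      { toFun := fun _ => 0
        invFun := fun _ => 0
        left_inv := fun x => Subsingleton.elim _ _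
        right_inv := fun x => Subsingleton.elim _ _
        map_mul' := fun _ _ => Subsingleton.elim _ _
        map_add' := fun _ _ => Subsingleton.elim _ _ }
  · -- N > 1
    set q : ℕ := N.minFac with hqdef
    have hq : q.Prime := Nat.minFac_prime (by omega)
    haveI : Fact q.Prime := ⟨hq⟩
    have hqN : q ∣ N := Nat.minFac_dvd N
    set e : ℕ := N.factorization q with hedef
    set M : ℕ := N / q ^ e with hMdef
    have hNeq : q ^ e * M = N := Nat.ordProj_mul_ordCompl_eq_self N q
    have hM0 : 0 < M := Nat.ordCompl_pos q hN.ne'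
    have he : 1 ≤ e := (Nat.Prime.dvd_iff_one_le_factorization hq hN.ne').1 hqN
    have hqe1 : 1 < q ^ e := by
      calc 1 < q := hq.one_lt
        _ = q ^ 1 := (pow_one q).symm
        _ ≤ q ^ e := Nat.pow_le_pow_right hq.pos he
    have hMlt : M < N := Nat.div_lt_self hN hqe1
    have hcopqM : Nat.Coprime (q ^ e) M :=
      (Nat.coprime_ordCompl hq hN.ne').pow_left e
    -- ideal for M by induction
    obtain ⟨𝒩', ⟨g⟩⟩ := ih M hMlt hM0
      (fun p hp hpM => hsplit p hp (hpM.trans (Nat.ordCompl_dvd N q)))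
    -- split prime above q
    obtain ⟨P, P', hne, hP, hP', hPP'⟩ := hsplit q hq hqN
    obtain ⟨f⟩ := aux_primepow K hdeg q hq P P' hne hP hP' hPP' e
    -- q ∈ P
    have hqP : (q : 𝓞 K) ∈ P := by
      have : Ideal.span {(q : 𝓞 K)} ≤ P := hPP' ▸ Ideal.mul_le_left
      exact this (Ideal.mem_span_singleton_self _)
    -- P^e and 𝒩' are coprime
    have hcopI : IsCoprime (P ^ e) 𝒩' := by
      rw [Ideal.isCoprime_iff_sup_eq, Ideal.eq_top_iff_one]
      -- find y with q^e * y ≡ 1 mod 𝒩'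
      let h : 𝓞 K →+* ZMod M := (g : (𝓞 K ⧸ 𝒩') →+* ZMod M).comp (Ideal.Quotient.mk 𝒩')
      have hhsurj : Function.Surjective h :=
        g.surjective.comp Ideal.Quotient.mk_surjective
      obtain ⟨y, hy⟩ := hhsurj ((ZMod.unitOfCoprime (q ^ e) hcopqM)⁻¹ : (ZMod M)ˣ)
      have hone : h ((q : 𝓞 K) ^ e * y) = 1 := by
        rw [map_mul]
        have h1 : h ((q : 𝓞 K) ^ e) =
            ((ZMod.unitOfCoprime (q ^ e) hcopqM : (ZMod M)ˣ) : ZMod M) := by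
          rw [map_pow, map_natCast, ZMod.coe_unitOfCoprime]
          push_cast
          ring
        rw [h1, hy, ← Units.val_mul, mul_inv_cancel, Units.val_one]
      have hmem : (q : 𝓞 K) ^ e * y - 1 ∈ 𝒩' := by
        have : Ideal.Quotient.mk 𝒩' ((q : 𝓞 K) ^ e * y - 1) = 0 := by
          apply g.injective
          rw [map_zero]
          have hone' : g (Ideal.Quotient.mk 𝒩' ((q : 𝓞 K) ^ e * y)) = 1 := hone
          simp only [map_sub, map_one, hone', sub_self]
        exact Ideal.Quotient.eq_zero_iff_mem.1 this
      refine Submodule.mem_sup.2 ⟨(q : 𝓞 K) ^ e * y, ?_, -((q : 𝓞 K) ^ e * y - 1), Submodule.neg_mem _ hmem, by ring⟩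
      exact Ideal.mul_mem_right y _ (Ideal.pow_mem_pow hqP e)
    -- assemble
    refine ⟨P ^ e * 𝒩', ⟨?_⟩⟩
    have chinese := ZMod.chineseRemainder hcopqM
    rw [hNeq] at chinese
    exact ((Ideal.quotientMulEquivQuotientProd (P ^ e) 𝒩' hcopI).trans
      (RingEquiv.prodCongr f g)).trans chinese.symm
end

section
/- Let K be a number field with [K:ℚ] = 2, let c and N be coprime positive integers, and let 𝒩 be an ideal of the ring of integers 𝒪_K such that 𝒪_K ⧸ 𝒩 is ring-isomorphic to ℤ/Nℤ. Let 𝒪_c = ℤ + c𝒪_K denote the order of conductor c, i.e. the subring of 𝒪_K consisting of those x for which there exists an integer m with x − m ∈ c𝒪_K, and set 𝒩_c = 𝒩 ∩ 𝒪_c (the preimage of 𝒩 under the inclusion 𝒪_c → 𝒪_K). Then: (1) the quotient ring 𝒪_c ⧸ 𝒩_c is isomorphic to ℤ/Nℤ, and (2) 𝒩_c is an invertible ideal of 𝒪_c, i.e. there exists a finitely generated 𝒪_c-submodule J of K such that the product of 𝒩_c and J (as 𝒪_c-submodules of K) equals 𝒪_c. -/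
open NumberField nonZeroDivisors

set_option synthInstance.maxHeartbeats 1000000 in
set_option maxHeartbeats 2000000 in
/-- If `𝒪_K ⧸ 𝒩 ≃ ℤ/Nℤ`, `c` is coprime to `N`, and `𝒪_c = ℤ + c𝒪_K` is the order of
conductor `c`, then `𝒩_c = 𝒩 ∩ 𝒪_c` satisfies `𝒪_c ⧸ 𝒩_c ≃ ℤ/Nℤ` and `𝒩_c` is an
invertible ideal of `𝒪_c`. -/
theorem stmt_1 (K : Type*) [Field K] [NumberField K]
    (hdeg : Module.finrank ℚ K = 2) (c N : ℕ) (hc : 0 < c) (hN : 0 < N)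
    (hcop : Nat.Coprime c N)
    (𝒩 : Ideal (𝓞 K)) (h𝒩 : Nonempty ((𝓞 K ⧸ 𝒩) ≃+* ZMod N))
    (Oc : Subring (𝓞 K))
    (hOc : ∀ x : 𝓞 K, x ∈ Oc ↔ ∃ m : ℤ, x - (m : 𝓞 K) ∈ Ideal.span {(c : 𝓞 K)})
    (Nc : Ideal Oc) (hNc : Nc = 𝒩.comap Oc.subtype) :
    Nonempty ((Oc ⧸ Nc) ≃+* ZMod N) ∧
      ∃ J : Submodule Oc K, J.FG ∧
        Submodule.map (Algebra.linearMap Oc K) Nc * J = (1 : Submodule Oc K) := by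
  classical
  obtain ⟨e⟩ := h𝒩
  have hNe : NeZero N := ⟨hN.ne'⟩
  -- basic membership facts about Oc
  have hc𝒪 : ∀ z : 𝓞 K, (c : 𝓞 K) * z ∈ Oc := by
    intro z
    refine (hOc _).mpr ⟨0, ?_⟩
    simpa using Ideal.mem_span_singleton.mpr ⟨z, rfl⟩
  -- N ∈ 𝒩
  have hNmem : (N : 𝓞 K) ∈ 𝒩 := by
    rw [← Ideal.Quotient.eq_zero_iff_mem]
    apply e.injective
    rw [map_zero]
    simpa using map_natCast (e.toRingHom.comp (Ideal.Quotient.mk 𝒩)) N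
  -- Part 1
  let φ : Oc →+* ZMod N := e.toRingHom.comp ((Ideal.Quotient.mk 𝒩).comp Oc.subtype)
  have hφ : ∀ x : Oc, φ x = e (Ideal.Quotient.mk 𝒩 (x : 𝓞 K)) := fun _ => rfl
  have hφker : RingHom.ker φ = Nc := by
    ext x
    rw [RingHom.mem_ker, hφ, hNc, Ideal.mem_comap]
    constructor
    · intro h
      have : Ideal.Quotient.mk 𝒩 (x : 𝓞 K) = 0 := e.injective (by simpa using h)
      exact (Ideal.Quotient.eq_zero_iff_mem).mp this
    · intro h
      have hx0 : Ideal.Quotient.mk 𝒩 (x : 𝓞 K) = 0 := Ideal.Quotient.eq_zero_iff_mem.mpr h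
      rw [hx0, map_zero]
  have hφsurj : Function.Surjective φ := by
    intro z
    obtain ⟨n, rfl⟩ := ZMod.natCast_zmod_surjective z
    exact ⟨(n : Oc), by rw [map_natCast]⟩
  have part1 : Nonempty ((Oc ⧸ Nc) ≃+* ZMod N) :=
    hφker ▸ ⟨RingHom.quotientKerEquivOfSurjective hφsurj⟩
  refine ⟨part1, ?_⟩
  -- Part 2
  have h𝒩ne : 𝒩 ≠ ⊥ := by
    intro hbot
    have hinj : Function.Injective (Ideal.Quotient.mk 𝒩) := by
      intro a b hab
      have := Ideal.Quotient.eq.mp hab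
      rw [hbot] at this
      exact sub_eq_zero.mp this
    have : Finite (𝓞 K ⧸ 𝒩) := Finite.of_equiv (ZMod N) e.symm.toEquiv
    exact (Finite.of_injective _ hinj).not_infinite inferInstance
  set I : FractionalIdeal (𝓞 K)⁰ K := (𝒩 : FractionalIdeal (𝓞 K)⁰ K) with hI
  have hI0 : I ≠ 0 := by rwa [hI, Ne, FractionalIdeal.coeIdeal_eq_zero]
  have hmul : I * I⁻¹ = 1 := mul_inv_cancel₀ hI0
  set 𝔟 : Submodule (𝓞 K) K := ((I⁻¹ : FractionalIdeal (𝓞 K)⁰ K) : Submodule (𝓞 K) K) with h𝔟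
  have h𝔟I : (I : Submodule (𝓞 K) K) * 𝔟 = (1 : Submodule (𝓞 K) K) := by
    rw [h𝔟, ← FractionalIdeal.coe_mul, hmul, FractionalIdeal.coe_one]
  have h𝔟fg : 𝔟.FG := FractionalIdeal.fg_of_isNoetherianRing le_rfl I⁻¹
  set P : Submodule (𝓞 K) K := 𝔟.map (LinearMap.lsmul (𝓞 K) K (c : 𝓞 K)) with hP
  set B : Submodule Oc K := P.restrictScalars Oc with hB
  set J : Submodule Oc K := B ⊔ 1 with hJ
  set M : Submodule Oc K := Submodule.map (Algebra.linearMap Oc K) Nc with hM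
  -- FG of J
  have hBfg : B.FG := by
    have h1 : Module.Finite (𝓞 K) P := Module.Finite.iff_fg.mpr (h𝔟fg.map _)
    have h2 : Module.Finite ℤ P := Module.Finite.trans (𝓞 K) P
    have h3 : Module.Finite ℤ B := h2
    have h4 : Module.Finite Oc B := Module.Finite.of_restrictScalars_finite ℤ Oc _
    exact Module.Finite.iff_fg.mp h4
  have hJfg : J.FG := hBfg.sup ⟨{1}, by rw [Submodule.one_eq_span]; simp⟩
  refine ⟨J, hJfg, ?_⟩
  -- key compatibility
  have algm : ∀ x : Oc, algebraMap Oc K x = algebraMap (𝓞 K) K (x : 𝓞 K) := fun _ => rfl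
  -- membership in M
  have hmemM : ∀ w : 𝓞 K, w ∈ 𝒩 → w ∈ Oc → algebraMap (𝓞 K) K w ∈ M := by
    intro w hw1 hw2
    refine Submodule.mem_map.mpr ⟨⟨w, hw2⟩, ?_, rfl⟩
    rw [hNc, Ideal.mem_comap]
    exact hw1
  -- M * B ≤ 1 and M ≤ 1
  have hMle : M ≤ (1 : Submodule Oc K) := by
    rintro x hx
    obtain ⟨n, _, rfl⟩ := Submodule.mem_map.mp hx
    exact Submodule.mem_one.mpr ⟨n, rfl⟩
  have hMB : M * B ≤ (1 : Submodule Oc K) := by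
    refine Submodule.mul_le.mpr ?_
    rintro x hx y hy
    obtain ⟨n, hn, rfl⟩ := Submodule.mem_map.mp hx
    have hy' : y ∈ P := hy
    obtain ⟨q, hq, rfl⟩ := Submodule.mem_map.mp hy'
    have hn𝒩 : (n : 𝓞 K) ∈ 𝒩 := by
      rw [hNc, Ideal.mem_comap] at hn; exact hn
    have h1 : (algebraMap (𝓞 K) K (n : 𝓞 K)) * q ∈ (I : Submodule (𝓞 K) K) * 𝔟 :=
      Submodule.mul_mem_mul (FractionalIdeal.mem_coeIdeal_of_mem _ hn𝒩) hq
    rw [h𝔟I] at h1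
    obtain ⟨w, hw⟩ := Submodule.mem_one.mp h1
    refine Submodule.mem_one.mpr ⟨⟨(c : 𝓞 K) * w, hc𝒪 w⟩, ?_⟩
    show algebraMap (𝓞 K) K ((c : 𝓞 K) * w) = _
    simp only [Algebra.linearMap_apply, LinearMap.lsmul_apply, Algebra.smul_def, algm,
      map_mul, hw]
    ring
  -- the product is ≤ 1
  have hle : M * J ≤ (1 : Submodule Oc K) := by
    rw [hJ, Submodule.mul_sup, Submodule.mul_one]
    exact sup_le hMB hMle
  -- ≥ direction
  have key : ∀ z ∈ (I : Submodule (𝓞 K) K) * 𝔟, ((c : K)) ^ 2 * z ∈ M * B := by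
    intro z hz
    refine Submodule.mul_induction_on hz ?_ ?_
    · intro p hp q hq
      have hp' : p ∈ ((𝒩 : FractionalIdeal (𝓞 K)⁰ K) : Submodule (𝓞 K) K) := hp
      obtain ⟨w, hw, rfl⟩ := (FractionalIdeal.mem_coeIdeal _).mp hp'
      have hcw : (c : 𝓞 K) * w ∈ 𝒩 := Ideal.mul_mem_left _ _ hw
      have hmm : algebraMap (𝓞 K) K ((c : 𝓞 K) * w) ∈ M := hmemM _ hcw (hc𝒪 w)
      have hqq0 : ((LinearMap.lsmul (𝓞 K) K) (c : 𝓞 K)) q ∈ P :=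
        Submodule.mem_map_of_mem (f := (LinearMap.lsmul (𝓞 K) K) (c : 𝓞 K)) hq
      have hqq : ((LinearMap.lsmul (𝓞 K) K) (c : 𝓞 K)) q ∈ B := hqq0
      have hmul2 := Submodule.mul_mem_mul hmm hqq
      convert hmul2 using 1
      simp only [LinearMap.lsmul_apply, Algebra.smul_def, map_mul, map_natCast]
      ring
    · intro x y hx hy
      rw [mul_add]
      exact Submodule.add_mem _ hx hy
  have hNinNc : ((N : Oc)) ∈ Nc := by
    rw [hNc, Ideal.mem_comap]
    simpa using hNmem
  have hge : (1 : K) ∈ M * J := by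
    -- Bezout: gcd(c^2, N) = 1
    have hcop2 : Nat.Coprime (c ^ 2) N := hcop.pow_left 2
    have hbez : (1 : ℤ) = (c ^ 2 : ℕ) * Nat.gcdA (c ^ 2) N + N * Nat.gcdB (c ^ 2) N := by
      have := Nat.gcd_eq_gcd_ab (c ^ 2) N
      rwa [hcop2, Nat.cast_one] at this
    set a : ℤ := Nat.gcdA (c ^ 2) N
    set b : ℤ := Nat.gcdB (c ^ 2) N
    have h1K : (1 : K) = (c : K) ^ 2 * (a : K) + (b : K) * (N : K) := by
      have := congrArg (fun t : ℤ => (t : K)) hbez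
      push_cast at this
      rw [this]; ring
    rw [h1K]
    have hterm1 : (c : K) ^ 2 * (a : K) ∈ M * J := by
      have ha : ((a : 𝓞 K) : K) ∈ (I : Submodule (𝓞 K) K) * 𝔟 := by
        rw [h𝔟I]
        exact Submodule.mem_one.mpr ⟨(a : 𝓞 K), rfl⟩
      have := key _ ha
      have hMBJ : M * B ≤ M * J := mul_le_mul' le_rfl le_sup_left
      apply hMBJ
      convert this using 2
      simp
    have hterm2 : (b : K) * (N : K) ∈ M * J := by
      have hNM : algebraMap Oc K (N : Oc) ∈ M :=
        Submodule.mem_map.mpr ⟨(N : Oc), hNinNc, rfl⟩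
      have hsmul : ((b : Oc)) • (algebraMap Oc K (N : Oc)) ∈ M := Submodule.smul_mem M _ hNM
      have hMJ : M ≤ M * J := by
        calc M = M * 1 := (Submodule.mul_one M).symm
        _ ≤ M * J := mul_le_mul' le_rfl le_sup_right
      apply hMJ
      convert hsmul using 1
      simp [Algebra.smul_def, algm]
    exact Submodule.add_mem _ hterm1 hterm2
  exact le_antisymm hle (Submodule.one_le.mpr hge)
end

section
/- Let p be a prime number and let a be an element of the ring ℤ_p of p-adic integers with ‖a‖_p = 1 (i.e. a is a unit). Then there exist α, β ∈ ℤ_p such that α + β = a, α·β = p, ‖α‖_p = 1 and ‖β‖_p = 1/p. Equivalently, the polynomial 1 − aX + pX² factors over ℤ_p as (1 − αX)(1 − βX) with ord_p(α) = 0 and ord_p(β) = 1. -/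
/-- For a unit `a` of `ℤ_p`, the polynomial `1 - aX + pX²` factors as `(1 - αX)(1 - βX)`
with `α` a unit and `β` of valuation one: i.e. there are `α β : ℤ_p` with `α + β = a`,
`α * β = p`, `‖α‖ = 1` and `‖β‖ = 1/p`. -/
theorem stmt_2 (p : ℕ) [Fact p.Prime] (a : ℤ_[p]) (ha : ‖a‖ = 1) :
    ∃ α β : ℤ_[p], α + β = a ∧ α * β = (p : ℤ_[p]) ∧ ‖α‖ = 1 ∧ ‖β‖ = ((p : ℝ))⁻¹ := by
  set F : Polynomial ℤ_[p] := Polynomial.X ^ 2 - Polynomial.C a * Polynomial.X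
    + Polynomial.C (p : ℤ_[p]) with hF
  have hevala : F.eval a = (p : ℤ_[p]) := by simp [hF]; ring
  have hderiv : F.derivative = Polynomial.C 2 * Polynomial.X - Polynomial.C a := by
    simp [hF]
    rw [← Polynomial.C_1, ← Polynomial.C_add, one_add_one_eq_two]
  have hderiva : F.derivative.eval a = a := by simp [hderiv]; ring
  have hnorm : ‖F.eval a‖ < ‖F.derivative.eval a‖ ^ 2 := by
    rw [hevala, hderiva, ha, one_pow, PadicInt.norm_p]
    have := (Fact.out : p.Prime).one_lt
    rw [inv_lt_one_iff₀]
    right; exact_mod_cast this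
  obtain ⟨α, hroot, hdist, hdn, -⟩ := hensels_lemma hnorm
  have hdista : ‖α - a‖ < 1 := by rwa [Polynomial.coe_aeval_eq_eval, hderiva, ha] at hdist
  have hα : ‖α‖ = 1 := by
    by_cases h0 : α - a = 0
    · rw [sub_eq_zero] at h0; rw [h0, ha]
    · have : ‖α‖ = ‖a + (α - a)‖ := by congr 1; ring
      have hne : ‖a‖ ≠ ‖α - a‖ := by rw [ha]; exact fun h => absurd h.symm (ne_of_lt hdista)
      rw [this, PadicInt.norm_add_eq_max_of_ne hne, ha]
      exact max_eq_left hdista.le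
  refine ⟨α, a - α, by ring, ?_, hα, ?_⟩
  · have : α ^ 2 - a * α + p = 0 := by simpa [hF] using hroot
    linear_combination -this
  · have hmul : α * (a - α) = (p : ℤ_[p]) := by
      have : α ^ 2 - a * α + p = 0 := by simpa [hF] using hroot
      linear_combination -this
    have := congrArg norm hmul
    rw [norm_mul, hα, one_mul, PadicInt.norm_p] at this
    exact this
end

section
/- Let p be a prime number, a ∈ ℤ_p, and let α be a unit of ℤ_p satisfying α² − aα + p = 0. Suppose given, for each natural number n, a ℤ_p-module M_n together with ℤ_p-linear maps ι_n : M_n → M_{n+1} (inclusion of levels) and tr_n : M_{n+1} → M_n (trace) such that tr_n ∘ ι_n = p · id on M_n for every n. Suppose further given elements x_n ∈ M_n satisfying the distribution relation tr_n(x_{n+1}) = a·x_n − ι_{n−1}(x_{n−1}) for all n ≥ 1. Define, for n ≥ 1, y_n = α^{1−n}·x_n − α^{−n}·ι_{n−1}(x_{n−1}) ∈ M_n (negative powers of α make sense since α is a unit of ℤ_p). Then tr_n(y_{n+1}) = y_n for every n ≥ 1. -/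
/-- The regularized Heegner points `y_n = α^{1-n}·x_n - α^{-n}·ι_{n-1}(x_{n-1})` are
trace-compatible: `tr_n (y_{n+1}) = y_n` for `n ≥ 1`. -/
theorem stmt_3 (p : ℕ) [Fact p.Prime] (a : ℤ_[p]) (α : ℤ_[p]ˣ)
    (hα : (α : ℤ_[p]) ^ 2 - a * (α : ℤ_[p]) + (p : ℤ_[p]) = 0)
    (M : ℕ → Type*) [∀ n, AddCommGroup (M n)] [∀ n, Module ℤ_[p] (M n)]
    (ι : ∀ n : ℕ, M n →ₗ[ℤ_[p]] M (n + 1))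
    (tr : ∀ n : ℕ, M (n + 1) →ₗ[ℤ_[p]] M n)
    (htrι : ∀ n : ℕ, ∀ m : M n, tr n (ι n m) = (p : ℤ_[p]) • m)
    (x : ∀ n : ℕ, M n)
    (hx : ∀ n : ℕ, tr (n + 1) (x (n + 2)) = a • x (n + 1) - ι n (x n))
    (y : ∀ n : ℕ, M n)
    (hy : ∀ n : ℕ,
      y (n + 1) = ((α ^ (1 - ((n + 1 : ℕ) : ℤ)) : ℤ_[p]ˣ) : ℤ_[p]) • x (n + 1)
        - ((α ^ (-((n + 1 : ℕ) : ℤ)) : ℤ_[p]ˣ) : ℤ_[p]) • ι n (x n)) :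
    ∀ n : ℕ, tr (n + 1) (y (n + 2)) = y (n + 1) := by
  intro n
  rw [hy n, hy (n + 1), map_sub, map_smul, map_smul, hx, htrι]
  push_cast
  rw [show (1 - ((n : ℤ) + 1 + 1)) = -((n : ℤ) + 2) + 1 from by ring,
    show (-((n : ℤ) + 1 + 1)) = -((n : ℤ) + 2) from by ring,
    show (1 - ((n : ℤ) + 1)) = -((n : ℤ) + 2) + 1 + 1 from by ring,
    show (-((n : ℤ) + 1)) = -((n : ℤ) + 2) + 1 from by ring]
  simp only [zpow_add_one, Units.val_mul]
  match_scalars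
  · linear_combination (-((α ^ (-((n : ℤ) + 2)) : ℤ_[p]ˣ) : ℤ_[p])) * hα
  · ring
end

section
/- Let p be a prime number and Λ = ℤ_p⟦T⟧ the ring of formal power series in one variable over the p-adic integers. For every finitely generated Λ-module M, the Λ-module Hom_Λ(M, Λ) of Λ-linear maps from M to Λ is a finitely generated free Λ-module. -/
open PowerSeries Finset

namespace Stmt4

variable (p : ℕ) [hp : Fact p.Prime]

/-- Separatedness of `ℤ_[p]`. -/
lemma padic_zero_of_dvd (x : ℤ_[p]) (h : ∀ K : ℕ, (p : ℤ_[p]) ^ K ∣ x) : x = 0 := by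
  by_contra hx
  have hxpos : 0 < ‖x‖ := by simpa [norm_pos_iff] using hx
  have hp1 : (1 : ℝ) < (p : ℝ) := by
    exact_mod_cast hp.out.one_lt
  obtain ⟨K, hK⟩ := exists_pow_lt_of_lt_one hxpos (by
    rw [inv_lt_one_iff₀]; right; exact hp1 : (p : ℝ)⁻¹ < 1)
  have hle : ‖x‖ ≤ (p : ℝ) ^ (-(K : ℤ)) := by
    rw [PadicInt.norm_le_pow_iff_mem_span_pow, Ideal.mem_span_singleton]
    exact h K
  rw [zpow_neg, zpow_natCast, ← inv_pow] at hle
  exact absurd (lt_of_le_of_lt hle hK) (lt_irrefl _)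

lemma C_dvd_of_coeff (a : ℤ_[p]) (f : PowerSeries ℤ_[p])
    (h : ∀ n, a ∣ PowerSeries.coeff (R := ℤ_[p]) n f) : PowerSeries.C (R := ℤ_[p]) a ∣ f := by
  refine ⟨PowerSeries.mk fun n => (h n).choose, ?_⟩
  ext n
  rw [PowerSeries.coeff_C_mul, PowerSeries.coeff_mk]
  exact (h n).choose_spec

lemma natCast_eq_C : ((p : ℕ) : PowerSeries ℤ_[p]) = PowerSeries.C (R := ℤ_[p]) ((p : ℕ) : ℤ_[p]) :=
  (map_natCast (PowerSeries.C (R := ℤ_[p])) p).symm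

lemma coeff_p_pow_mul (K : ℕ) (g : PowerSeries ℤ_[p]) (n : ℕ) :
    PowerSeries.coeff (R := ℤ_[p]) n ((p : PowerSeries ℤ_[p]) ^ K * g) =
      (p : ℤ_[p]) ^ K * PowerSeries.coeff (R := ℤ_[p]) n g := by
  rw [natCast_eq_C, ← map_pow, PowerSeries.coeff_C_mul]

lemma pow_dvd_coeff (K : ℕ) (f : PowerSeries ℤ_[p]) (h : (p : PowerSeries ℤ_[p]) ^ K ∣ f)
    (n : ℕ) : (p : ℤ_[p]) ^ K ∣ PowerSeries.coeff (R := ℤ_[p]) n f := by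
  obtain ⟨g, rfl⟩ := h
  exact ⟨PowerSeries.coeff (R := ℤ_[p]) n g, coeff_p_pow_mul p K g n⟩

lemma pow_dvd_of_coeff (K : ℕ) (f : PowerSeries ℤ_[p])
    (h : ∀ n, (p : ℤ_[p]) ^ K ∣ PowerSeries.coeff (R := ℤ_[p]) n f) :
    (p : PowerSeries ℤ_[p]) ^ K ∣ f := by
  have := C_dvd_of_coeff p ((p : ℤ_[p]) ^ K) f (by exact_mod_cast h)
  rw [map_pow] at this
  rw [natCast_eq_C]
  exact_mod_cast this

/-- Separatedness of `ℤ_[p]⟦T⟧`. -/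
lemma ps_zero_of_dvd (f : PowerSeries ℤ_[p]) (h : ∀ K : ℕ, (p : PowerSeries ℤ_[p]) ^ K ∣ f) :
    f = 0 := by
  ext n
  rw [map_zero]
  exact padic_zero_of_dvd p _ fun K => pow_dvd_coeff p K f (h K) n

local notation "K" => PowerSeries (ZMod p)

noncomputable def πr : PowerSeries ℤ_[p] →+* K := PowerSeries.map (PadicInt.toZMod)

lemma πr_surjective : Function.Surjective (πr p) := by
  intro g
  haveI : NeZero p := ⟨hp.out.ne_zero⟩
  refine ⟨PowerSeries.mk fun n => ((PowerSeries.coeff (R := ZMod p) n g).val : ℤ_[p]), ?_⟩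
  ext n
  rw [πr, PowerSeries.coeff_map, PowerSeries.coeff_mk, map_natCast, ZMod.natCast_val,
    ZMod.cast_id]

lemma πr_eq_zero_iff (f : PowerSeries ℤ_[p]) :
    πr p f = 0 ↔ (p : PowerSeries ℤ_[p]) ∣ f := by
  constructor
  · intro h
    have h' : ∀ n, (p : ℤ_[p]) ∣ PowerSeries.coeff (R := ℤ_[p]) n f := by
      intro n
      have : PadicInt.toZMod (PowerSeries.coeff (R := ℤ_[p]) n f) = 0 := by
        have := congrArg (PowerSeries.coeff (R := ZMod p) n) h
        rwa [πr, PowerSeries.coeff_map, map_zero] at this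
      have hmem : PowerSeries.coeff (R := ℤ_[p]) n f ∈ RingHom.ker (PadicInt.toZMod (p := p)) := this
      rw [PadicInt.ker_toZMod, PadicInt.maximalIdeal_eq_span_p, Ideal.mem_span_singleton] at hmem
      exact hmem
    have := C_dvd_of_coeff p ((p : ℕ) : ℤ_[p]) f h'
    rwa [← natCast_eq_C] at this
  · rintro ⟨g, rfl⟩
    rw [map_mul, map_natCast]
    have : ((p : ℕ) : K) = 0 := by
      rw [← map_natCast (PowerSeries.C (R := ZMod p)) p, ZMod.natCast_self, map_zero]
    rw [this, zero_mul]

lemma p_ne_zero : (p : PowerSeries ℤ_[p]) ≠ 0 := by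
  intro h
  have := congrArg (PowerSeries.coeff (R := ℤ_[p]) 0) h
  rw [natCast_eq_C, PowerSeries.coeff_zero_C, map_zero] at this
  exact (Nat.cast_ne_zero.mpr hp.out.ne_zero : ((p : ℕ) : ℤ_[p]) ≠ 0) this

section Module

variable (M : Type*) [AddCommGroup M] [Module (PowerSeries ℤ_[p]) M]
  [Module.Finite (PowerSeries ℤ_[p]) M]

local notation "Λ" => PowerSeries ℤ_[p]
local notation "N" => M →ₗ[PowerSeries ℤ_[p]] PowerSeries ℤ_[p]

variable {M}

/-- divide a dual element by `p` when all its values are divisible. -/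
lemma exists_div (φ : N) (h : ∀ m : M, (p : Λ) ∣ φ m) :
    ∃ χ : N, φ = (p : Λ) • χ := by
  choose c hc using h
  refine ⟨{ toFun := c
            map_add' := ?_
            map_smul' := ?_ }, ?_⟩
  · intro x y
    apply mul_left_cancel₀ (p_ne_zero p)
    rw [← hc, map_add, mul_add, ← hc, ← hc]
  · intro r x
    apply mul_left_cancel₀ (p_ne_zero p)
    simp only [RingHom.id_apply]
    rw [← hc, map_smul, smul_eq_mul, smul_eq_mul, mul_left_comm, ← hc]
  · apply LinearMap.ext; intro m
    simp only [LinearMap.smul_apply, LinearMap.coe_mk, AddHom.coe_mk, smul_eq_mul]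
    exact hc m

lemma smul_eq_zero_iff (r : Λ) (φ : N) (hr : r ≠ 0) (h : r • φ = 0) : φ = 0 := by
  apply LinearMap.ext; intro m
  have : r * φ m = 0 := by
    have := congrArg (fun ψ : N => ψ m) h
    simpa using this
  rcases mul_eq_zero.mp this with h' | h'
  · exact absurd h' hr
  · simpa using h'


variable (M)

set_option maxHeartbeats 1000000 in
lemma dual_free_finite :
    Module.Free (PowerSeries ℤ_[p]) (M →ₗ[PowerSeries ℤ_[p]] PowerSeries ℤ_[p]) ∧
      Module.Finite (PowerSeries ℤ_[p]) (M →ₗ[PowerSeries ℤ_[p]] PowerSeries ℤ_[p]) := by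
  classical
  obtain ⟨n, π, hπ⟩ := Module.Finite.exists_fin' Λ M
  set v : Fin n → M := fun i => π (Pi.single i 1) with hv
  have hrep : ∀ m : M, ∃ c : Fin n → Λ, m = ∑ i, c i • v i := by
    intro m
    obtain ⟨y, rfl⟩ := hπ m
    refine ⟨y, ?_⟩
    have hsingle : ∀ i : Fin n, (fun j => if i = j then (1 : Λ) else 0) = Pi.single i (1 : Λ) := by
      intro i; funext j; simp [Pi.single_apply, eq_comm]
    calc π y = π (∑ i, y i • fun j => if i = j then (1 : Λ) else 0) := by
          rw [← pi_eq_sum_univ y]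
      _ = ∑ i, π (y i • fun j => if i = j then (1 : Λ) else 0) := by rw [map_sum]
      _ = ∑ i, y i • v i := by
          refine Finset.sum_congr rfl fun i _ => ?_
          rw [map_smul, hsingle i, hv]
  set θ : N → (Fin n → K) := fun φ i => πr p (φ (v i)) with hθ
  have θ_add : ∀ φ ψ : N, θ (φ + ψ) = θ φ + θ ψ := by
    intro φ ψ; funext i; simp [hθ]
  have θ_smul : ∀ (f : Λ) (φ : N), θ (f • φ) = πr p f • θ φ := by
    intro f φ; funext i
    simp only [hθ, LinearMap.smul_apply, smul_eq_mul, map_mul, Pi.smul_apply]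
  have θ_zero : θ 0 = 0 := by funext i; simp [hθ]
  set Θ : N →+ (Fin n → K) := AddMonoidHom.mk' θ θ_add with hΘ
  have θ_ker : ∀ φ : N, θ φ = 0 → ∀ m : M, (p : Λ) ∣ φ m := by
    intro φ h0 m
    obtain ⟨c, rfl⟩ := hrep m
    rw [map_sum]
    refine Finset.dvd_sum fun i _ => ?_
    rw [map_smul, smul_eq_mul]
    refine Dvd.dvd.mul_left ?_ _
    exact (πr_eq_zero_iff p _).mp (congrFun h0 i)
  set W : Submodule K (Fin n → K) :=
    { carrier := Set.range θ
      add_mem' := by rintro _ _ ⟨φ, rfl⟩ ⟨ψ, rfl⟩; exact ⟨φ + ψ, θ_add φ ψ⟩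
      zero_mem' := ⟨0, θ_zero⟩
      smul_mem' := by
        rintro a _ ⟨φ, rfl⟩
        obtain ⟨f, rfl⟩ := πr_surjective p a
        exact ⟨f • φ, θ_smul f φ⟩ } with hW
  have memW : ∀ z : Fin n → K, z ∈ W ↔ ∃ φ : N, θ φ = z := fun z => Iff.rfl
  haveI : IsNoetherian K (Fin n → K) := inferInstance
  haveI : Module.Finite K W := Module.Finite.iff_fg.mpr (IsNoetherian.noetherian W)
  haveI : Module.Free K W := Module.free_of_finite_type_torsion_free'
  set ι := Module.Free.ChooseBasisIndex K W with hι
  set b : Module.Basis ι K W := Module.Free.chooseBasis K W with hb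
  choose x hx using fun i => (memW (b i : Fin n → K)).mp (b i).2
  -- the key division step
  have key : ∀ ψ : N, ∃ (a : ι → Λ) (ψ' : N), ψ = (∑ i, a i • x i) + (p : Λ) • ψ' := by
    intro ψ
    have hmem : θ ψ ∈ W := ⟨ψ, rfl⟩
    set w : W := ⟨θ ψ, hmem⟩ with hw'
    have hw : ∑ i, b.repr w i • b i = w := b.sum_repr w
    choose a ha using fun i => πr_surjective p (b.repr w i)
    have h0 : θ (ψ - ∑ i, a i • x i) = 0 := by
      have hs : θ (ψ - ∑ i, a i • x i) = Θ ψ - Θ (∑ i, a i • x i) := map_sub Θ _ _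
      rw [hs, map_sum]
      have h1 : ∀ i : ι, Θ (a i • x i) = b.repr w i • (b i : Fin n → K) := by
        intro i
        show θ (a i • x i) = _
        rw [θ_smul, hx, ha]
      rw [Finset.sum_congr rfl fun i _ => h1 i]
      have h2 : Θ ψ = (w : Fin n → K) := rfl
      rw [h2, sub_eq_zero]
      calc (w : Fin n → K) = ((∑ i, b.repr w i • b i : W) : Fin n → K) := by rw [hw]
        _ = ∑ i, b.repr w i • (b i : Fin n → K) := by
            simp only [Submodule.coe_sum, Submodule.coe_smul]
    obtain ⟨χ, hχ⟩ := exists_div p _ (θ_ker _ h0)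
    exact ⟨a, χ, by rw [← hχ]; abel⟩
  -- spanning via completeness
  have span_top : ∀ φ : N, φ ∈ Submodule.span Λ (Set.range x) := by
    intro φ
    set step : N → (ι → Λ) × N := fun ψ => ⟨(key ψ).choose, (key ψ).choose_spec.choose⟩
      with hstepdef
    have hstep : ∀ ψ : N, ψ = (∑ i, (step ψ).1 i • x i) + (p : Λ) • (step ψ).2 :=
      fun ψ => (key ψ).choose_spec.choose_spec
    set y : ℕ → N := fun k => Nat.rec φ (fun _ ih => (step ih).2) k with hy
    set c : ℕ → ι → Λ := fun k => (step (y k)).1 with hc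
    have hyk : ∀ k, y k = (∑ i, c k i • x i) + (p : Λ) • y (k + 1) := fun k => hstep (y k)
    have hpartial : ∀ Kn : ℕ,
        φ = (∑ i, (∑ k ∈ Finset.range Kn, (p : Λ) ^ k * c k i) • x i) + (p : Λ) ^ Kn • y Kn := by
      intro Kn
      induction Kn with
      | zero => simpa using (by rfl : φ = y 0)
      | succ K1 ih =>
        rw [ih, hyk K1]
        have e1 : ∀ i : ι, (∑ k ∈ Finset.range (K1 + 1), (p : Λ) ^ k * c k i) • x i
            = (∑ k ∈ Finset.range K1, (p : Λ) ^ k * c k i) • x i + ((p : Λ) ^ K1 * c K1 i) • x i := by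
          intro i; rw [Finset.sum_range_succ, add_smul]
        rw [Finset.sum_congr rfl fun i _ => e1 i, Finset.sum_add_distrib]
        rw [smul_add, Finset.smul_sum]
        have e2 : ∀ i : ι, (p : Λ) ^ K1 • (c K1 i • x i) = ((p : Λ) ^ K1 * c K1 i) • x i := by
          intro i; rw [smul_smul]
        rw [Finset.sum_congr rfl fun i _ => e2 i, smul_smul, ← pow_succ]
        abel
    have hsummable : ∀ z : ℕ → ℤ_[p], Summable fun k => (p : ℤ_[p]) ^ k * z k := by
      intro z
      have hlt : ((p : ℝ))⁻¹ < 1 := by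
        rw [inv_lt_one_iff₀]; right; exact_mod_cast hp.out.one_lt
      refine Summable.of_norm_bounded (g := fun k => ((p : ℝ)⁻¹) ^ k)
        (summable_geometric_of_lt_one (by positivity) hlt) ?_
      intro k
      calc ‖(p : ℤ_[p]) ^ k * z k‖ ≤ ‖(p : ℤ_[p]) ^ k‖ * ‖z k‖ := norm_mul_le _ _
        _ ≤ ‖(p : ℤ_[p]) ^ k‖ * 1 := by
            exact mul_le_mul_of_nonneg_left (PadicInt.norm_le_one _) (norm_nonneg _)
        _ = ((p : ℝ)⁻¹) ^ k := by
            rw [mul_one, norm_pow, PadicInt.norm_p]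
    set A : ι → Λ := fun i =>
      PowerSeries.mk fun m => ∑' k, (p : ℤ_[p]) ^ k * PowerSeries.coeff (R := ℤ_[p]) m (c k i)
      with hA'
    have hA : ∀ (i : ι) (Kn : ℕ),
        (p : Λ) ^ Kn ∣ (A i - ∑ k ∈ Finset.range Kn, (p : Λ) ^ k * c k i) := by
      intro i Kn
      apply pow_dvd_of_coeff
      intro m
      have hsum := hsummable fun k => PowerSeries.coeff (R := ℤ_[p]) m (c k i)
      have hsum2 := hsummable fun k => PowerSeries.coeff (R := ℤ_[p]) m (c (k + Kn) i)
      rw [map_sub, map_sum]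
      have hcoeff : ∀ k, PowerSeries.coeff (R := ℤ_[p]) m ((p : Λ) ^ k * c k i)
          = (p : ℤ_[p]) ^ k * PowerSeries.coeff (R := ℤ_[p]) m (c k i) :=
        fun k => coeff_p_pow_mul p k _ m
      rw [Finset.sum_congr rfl fun k _ => hcoeff k]
      have hAc : PowerSeries.coeff (R := ℤ_[p]) m (A i)
          = ∑' k, (p : ℤ_[p]) ^ k * PowerSeries.coeff (R := ℤ_[p]) m (c k i) := by
        rw [hA', PowerSeries.coeff_mk]
      rw [hAc]
      have htail := Summable.sum_add_tsum_nat_add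
        (f := fun k => (p : ℤ_[p]) ^ k * PowerSeries.coeff (R := ℤ_[p]) m (c k i)) Kn hsum
      have h3 : (∑' k, (p : ℤ_[p]) ^ k * PowerSeries.coeff (R := ℤ_[p]) m (c k i))
          - ∑ k ∈ Finset.range Kn, (p : ℤ_[p]) ^ k * PowerSeries.coeff (R := ℤ_[p]) m (c k i)
          = ∑' k, (p : ℤ_[p]) ^ (k + Kn) * PowerSeries.coeff (R := ℤ_[p]) m (c (k + Kn) i) := by
        rw [← htail]; ring
      rw [h3]
      refine ⟨∑' k, (p : ℤ_[p]) ^ k * PowerSeries.coeff (R := ℤ_[p]) m (c (k + Kn) i), ?_⟩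
      rw [← Summable.tsum_mul_left _ hsum2]
      exact tsum_congr fun k => by ring
    have hφ : φ = ∑ i, A i • x i := by
      have hdvd : ∀ (Kn : ℕ) (m : M), (p : Λ) ^ Kn ∣ (φ - ∑ i, A i • x i) m := by
        intro Kn m
        have h2 : φ - ∑ i, A i • x i
            = (∑ i, ((∑ k ∈ Finset.range Kn, (p : Λ) ^ k * c k i) - A i) • x i)
              + (p : Λ) ^ Kn • y Kn := by
          conv_lhs => rw [hpartial Kn]
          rw [Finset.sum_congr rfl fun i (_ : i ∈ Finset.univ) => sub_smul
            (∑ k ∈ Finset.range Kn, (p : Λ) ^ k * c k i) (A i) (x i), Finset.sum_sub_distrib]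
          abel
        rw [h2]
        simp only [LinearMap.add_apply, LinearMap.sum_apply, LinearMap.smul_apply, smul_eq_mul]
        refine dvd_add (Finset.dvd_sum fun i _ => ?_) ⟨(y Kn) m, rfl⟩
        obtain ⟨t, ht⟩ := hA i Kn
        have h4 : (∑ k ∈ Finset.range Kn, (p : Λ) ^ k * c k i) - A i = (p : Λ) ^ Kn * (-t) := by
          rw [← neg_sub, ht]; ring
        rw [h4, mul_assoc]
        exact Dvd.intro _ rfl
      have h5 : φ - ∑ i, A i • x i = 0 := by
        apply LinearMap.ext; intro m
        rw [LinearMap.zero_apply]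
        exact ps_zero_of_dvd p _ fun Kn => hdvd Kn m
      exact sub_eq_zero.mp h5
    rw [hφ]
    exact Submodule.sum_mem _ fun i _ =>
      Submodule.smul_mem _ _ (Submodule.subset_span ⟨i, rfl⟩)
  have lin : LinearIndependent Λ x := by
    rw [Fintype.linearIndependent_iff]
    intro g hg
    by_contra hne
    push_neg at hne
    obtain ⟨j, hj0⟩ := hne
    have hex : ∃ Kn : ℕ, ¬ ∀ i, (p : Λ) ^ Kn ∣ g i := by
      by_contra hall
      push_neg at hall
      exact hj0 (ps_zero_of_dvd p _ fun Kn => hall Kn j)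
    have hspec : ¬ ∀ i, (p : Λ) ^ (Nat.find hex) ∣ g i := Nat.find_spec hex
    have hk0 : Nat.find hex ≠ 0 := by
      intro h
      exact hspec fun i => by rw [h, pow_zero]; exact one_dvd _
    obtain ⟨K1, hK1⟩ : ∃ K1, Nat.find hex = K1 + 1 :=
      ⟨Nat.find hex - 1, (Nat.succ_pred_eq_of_pos (Nat.pos_of_ne_zero hk0)).symm⟩
    have hall : ∀ i, (p : Λ) ^ K1 ∣ g i := by
      by_contra hcon
      exact Nat.find_min hex (by omega) hcon
    choose e he using hall
    have hsum0 : (p : Λ) ^ K1 • (∑ i, e i • x i) = 0 := by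
      rw [Finset.smul_sum]
      refine (Finset.sum_congr rfl fun i _ => ?_).trans hg
      rw [smul_smul, ← he]
    have hzero := smul_eq_zero_iff p _ _ (pow_ne_zero _ (p_ne_zero p)) hsum0
    have hθ0 : ∑ i, (πr p (e i)) • (b i : Fin n → K) = 0 := by
      calc ∑ i, (πr p (e i)) • (b i : Fin n → K) = ∑ i, Θ (e i • x i) := by
            refine Finset.sum_congr rfl fun i _ => ?_
            show _ = θ (e i • x i)
            rw [θ_smul, hx]
        _ = Θ (∑ i, e i • x i) := (map_sum Θ _ _).symm
        _ = 0 := by rw [hzero]; exact θ_zero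
    have hθ0' : ∑ i, (πr p (e i)) • b i = (0 : W) := by
      apply Subtype.coe_injective
      push_cast
      simpa using hθ0
    have hcoe := Fintype.linearIndependent_iff.mp b.linearIndependent (fun i => πr p (e i)) hθ0'
    apply hspec
    intro i
    obtain ⟨u, hu⟩ := (πr_eq_zero_iff p _).mp (hcoe i)
    refine ⟨u, ?_⟩
    rw [he i, hu, hK1]; ring
  have bN : Module.Basis ι Λ (M →ₗ[Λ] Λ) := Module.Basis.mk lin (fun φ _ => span_top φ)
  exact ⟨Module.Free.of_basis bN, Module.Finite.of_basis bN⟩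


variable {M}

end Module

end Stmt4

/-- For `Λ = ℤ_p⟦T⟧` and any finitely generated `Λ`-module `M`, the dual module
`Hom_Λ(M, Λ)` is a finitely generated free `Λ`-module. -/
theorem stmt_4 (p : ℕ) [Fact p.Prime]
    (M : Type*) [AddCommGroup M] [Module (PowerSeries ℤ_[p]) M]
    [Module.Finite (PowerSeries ℤ_[p]) M] :
    Module.Free (PowerSeries ℤ_[p]) (M →ₗ[PowerSeries ℤ_[p]] PowerSeries ℤ_[p]) ∧
      Module.Finite (PowerSeries ℤ_[p]) (M →ₗ[PowerSeries ℤ_[p]] PowerSeries ℤ_[p]) :=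
  Stmt4.dual_free_finite p M
end

section
/- Let p be a prime number and let f ∈ ℤ_p[X] be a monic polynomial of degree d ≥ 1 all of whose coefficients of X^i for i < d are divisible by p (a distinguished polynomial). Then the quotient ring ℤ_p⟦X⟧ ⧸ (f), of the power series ring ℤ_p⟦X⟧ by the ideal generated by f, is a free ℤ_p-module of rank d. -/
set_option maxHeartbeats 1000000
set_option synthInstance.maxHeartbeats 400000

open Finset PowerSeries

namespace Stmt6Aux

variable {p : ℕ} [Fact p.Prime]

lemma zero_of_dvd_all {x : ℤ_[p]} (h : ∀ n : ℕ, (p : ℤ_[p]) ^ n ∣ x) : x = 0 := by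
  by_contra hx
  have h2 : ∀ n : ℕ, (n : ℤ) ≤ x.valuation := fun n => by
    exact_mod_cast (PadicInt.mem_span_pow_iff_le_valuation x hx n).mp
      (Ideal.mem_span_singleton.mpr (h n))
  have hv : (0 : ℤ) ≤ (x.valuation : ℤ) := Int.natCast_nonneg _
  have h3 := h2 ((x.valuation : ℤ).toNat + 1)
  rw [Nat.cast_add, Nat.cast_one, Int.toNat_of_nonneg hv] at h3
  omega

variable {d : ℕ} {f : Polynomial ℤ_[p]}

/-- single step of p-divisibility for the uniqueness part -/
lemma dvd_step (hmonic : f.Monic) (hdeg : f.natDegree = d)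
    (hdist : ∀ i < d, (p : ℤ_[p]) ∣ f.coeff i)
    (q : PowerSeries ℤ_[p])
    (hq : ∀ m, d ≤ m → coeff (R := ℤ_[p]) m (q * ↑f) = 0)
    (k : ℕ) : (p : ℤ_[p]) ∣ coeff (R := ℤ_[p]) k q := by
  have h0 := hq (k + d) (le_add_self)
  rw [PowerSeries.coeff_mul] at h0
  have hmem : ((k, d) : ℕ × ℕ) ∈ Finset.HasAntidiagonal.antidiagonal (k + d) := by
    simp
  rw [← Finset.add_sum_erase _ _ hmem] at h0
  have hfd : coeff (R := ℤ_[p]) d (↑f : PowerSeries ℤ_[p]) = 1 := by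
    rw [Polynomial.coeff_coe, ← hdeg]; exact hmonic.coeff_natDegree
  have hsum : (p : ℤ_[p]) ∣
      ∑ x ∈ (Finset.HasAntidiagonal.antidiagonal (k + d)).erase (k, d),
        coeff (R := ℤ_[p]) x.1 q * coeff (R := ℤ_[p]) x.2 (↑f : PowerSeries ℤ_[p]) := by
    refine Finset.dvd_sum fun x hx => ?_
    have hx' := Finset.mem_erase.mp hx
    have hxad := Finset.HasAntidiagonal.mem_antidiagonal.mp hx'.2
    rcases lt_trichotomy x.2 d with h | h | h
    · exact Dvd.dvd.mul_left (by rw [Polynomial.coeff_coe]; exact hdist x.2 h) _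
    · exfalso; apply hx'.1
      have : x.1 = k := by omega
      exact Prod.ext this h
    · have : coeff (R := ℤ_[p]) x.2 (↑f : PowerSeries ℤ_[p]) = 0 := by
        rw [Polynomial.coeff_coe]
        exact Polynomial.coeff_eq_zero_of_natDegree_lt (by omega)
      rw [this, mul_zero]
      exact dvd_zero _
  rw [hfd, mul_one] at h0
  have : coeff (R := ℤ_[p]) k q = -∑ x ∈ (Finset.HasAntidiagonal.antidiagonal (k + d)).erase (k, d),
      coeff (R := ℤ_[p]) x.1 q * coeff (R := ℤ_[p]) x.2 (↑f : PowerSeries ℤ_[p]) :=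
    eq_neg_of_add_eq_zero_left h0
  rw [this]
  exact dvd_neg.mpr hsum

lemma dvd_pow_all (hmonic : f.Monic) (hdeg : f.natDegree = d)
    (hdist : ∀ i < d, (p : ℤ_[p]) ∣ f.coeff i) :
    ∀ n : ℕ, ∀ q : PowerSeries ℤ_[p],
      (∀ m, d ≤ m → coeff (R := ℤ_[p]) m (q * ↑f) = 0) →
      ∀ k, (p : ℤ_[p]) ^ n ∣ coeff (R := ℤ_[p]) k q := by
  intro n
  induction n with
  | zero => intro q _ k; simp
  | succ n ih =>
    intro q hq k
    have h1 : ∀ m, (p : ℤ_[p]) ∣ coeff (R := ℤ_[p]) m q :=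
      dvd_step hmonic hdeg hdist q hq
    set q1 : PowerSeries ℤ_[p] := PowerSeries.mk fun m => Classical.choose (h1 m) with hq1def
    have hq1 : q = (p : ℤ_[p]) • q1 := by
      ext m
      rw [PowerSeries.coeff_smul, hq1def, PowerSeries.coeff_mk, smul_eq_mul]
      exact Classical.choose_spec (h1 m)
    have hpne : (p : ℤ_[p]) ≠ 0 := by
      exact_mod_cast Nat.cast_ne_zero.mpr (Fact.out (p := p.Prime)).ne_zero
    have hq1f : ∀ m, d ≤ m → coeff (R := ℤ_[p]) m (q1 * ↑f) = 0 := by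
      intro m hm
      have := hq m hm
      rw [hq1, smul_mul_assoc, PowerSeries.coeff_smul, smul_eq_mul] at this
      exact (mul_eq_zero.mp this).resolve_left hpne
    have := ih q1 hq1f k
    rw [hq1, PowerSeries.coeff_smul, smul_eq_mul, pow_succ, mul_comm ((p : ℤ_[p]) ^ n)]
    exact mul_dvd_mul_left _ this

lemma unique_zero (hmonic : f.Monic) (hdeg : f.natDegree = d)
    (hdist : ∀ i < d, (p : ℤ_[p]) ∣ f.coeff i)
    (q : PowerSeries ℤ_[p])
    (hq : ∀ m, d ≤ m → coeff (R := ℤ_[p]) m (q * ↑f) = 0) : q = 0 := by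
  ext k
  rw [map_zero]
  exact zero_of_dvd_all fun n => dvd_pow_all hmonic hdeg hdist n q hq k

/-- Weierstrass division: existence of q so that g - q f has no terms of degree ≥ d. -/
lemma weier_div (hmonic : f.Monic) (hdeg : f.natDegree = d)
    (hdist : ∀ i < d, (p : ℤ_[p]) ∣ f.coeff i) (g : PowerSeries ℤ_[p]) :
    ∃ q : PowerSeries ℤ_[p], ∀ m, d ≤ m →
      coeff (R := ℤ_[p]) m (g - q * ↑f) = 0 := by
  classical
  set e : PowerSeries ℤ_[p] :=
    ((Polynomial.X ^ d - f : Polynomial ℤ_[p]) : PowerSeries ℤ_[p]) with hedef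
  have he : ∀ i, (p : ℤ_[p]) ∣ coeff (R := ℤ_[p]) i e := by
    intro i
    rw [hedef, Polynomial.coeff_coe, Polynomial.coeff_sub, Polynomial.coeff_X_pow]
    rcases lt_trichotomy i d with h | h | h
    · simp only [if_neg (by omega : ¬ i = d), zero_sub, dvd_neg]
      exact hdist i h
    · subst h
      rw [if_pos rfl, ← hdeg, hmonic.coeff_natDegree, sub_self]
      exact dvd_zero _
    · rw [if_neg (by omega : ¬ i = d),
        Polynomial.coeff_eq_zero_of_natDegree_lt (by omega), zero_sub, neg_zero]
      exact dvd_zero _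
  -- the approximating sequence
  set Qs : ℕ → PowerSeries ℤ_[p] := fun n =>
    Nat.rec 0 (fun _ qn => PowerSeries.mk fun k =>
      coeff (R := ℤ_[p]) (k + d) (g + e * qn)) n with hQsdef
  have hQs : ∀ n k, coeff (R := ℤ_[p]) k (Qs (n + 1)) = coeff (R := ℤ_[p]) (k + d) (g + e * Qs n) := by
    intro n k
    rw [hQsdef]
    exact PowerSeries.coeff_mk _ _
  have hA : ∀ n k, (p : ℤ_[p]) ^ n ∣ coeff (R := ℤ_[p]) k (Qs (n + 1)) - coeff (R := ℤ_[p]) k (Qs n) := by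
    intro n
    induction n with
    | zero => intro k; simp
    | succ n ih =>
      intro k
      rw [hQs (n + 1), hQs n, ← map_sub, add_sub_add_left_eq_sub, ← mul_sub, PowerSeries.coeff_mul]
      refine Finset.dvd_sum fun x _ => ?_
      rw [map_sub, pow_succ, mul_comm ((p : ℤ_[p]) ^ n)]
      exact mul_dvd_mul (he x.1) (ih x.2)
  -- each coefficient sequence is Cauchy
  have hcauchy : ∀ k, CauchySeq (fun n => coeff (R := ℤ_[p]) k (Qs n)) := by
    intro k
    have hp1 : (1 : ℝ) < (p : ℝ) := by
      exact_mod_cast (Fact.out (p := p.Prime)).one_lt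
    have hr : (p : ℝ)⁻¹ < 1 := inv_lt_one_of_one_lt₀ hp1
    refine cauchySeq_of_le_geometric (p : ℝ)⁻¹ 1 hr fun n => ?_
    rw [dist_eq_norm, ← norm_neg, neg_sub]
    have hdvd := hA n k
    have hnorm : ‖coeff (R := ℤ_[p]) k (Qs (n + 1)) - coeff (R := ℤ_[p]) k (Qs n)‖ ≤ (p : ℝ) ^ (-(n : ℤ)) :=
      (PadicInt.norm_le_pow_iff_mem_span_pow _ n).mpr
        (Ideal.mem_span_singleton.mpr hdvd)
    calc ‖coeff (R := ℤ_[p]) k (Qs (n + 1)) - coeff (R := ℤ_[p]) k (Qs n)‖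
        ≤ (p : ℝ) ^ (-(n : ℤ)) := hnorm
      _ = 1 * ((p : ℝ)⁻¹) ^ n := by
          rw [one_mul, inv_pow, ← zpow_natCast, ← zpow_neg]
  have hlim : ∀ k, ∃ a : ℤ_[p], Filter.Tendsto (fun n => coeff (R := ℤ_[p]) k (Qs n))
      Filter.atTop (nhds a) := fun k => cauchySeq_tendsto_of_complete (hcauchy k)
  set q : PowerSeries ℤ_[p] := PowerSeries.mk fun k => Classical.choose (hlim k) with hqdef
  have htend : ∀ k, Filter.Tendsto (fun n => coeff (R := ℤ_[p]) k (Qs n))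
      Filter.atTop (nhds (coeff (R := ℤ_[p]) k q)) := by
    intro k
    rw [hqdef, PowerSeries.coeff_mk]
    exact Classical.choose_spec (hlim k)
  -- fixed point property
  have hfix : ∀ k, coeff (R := ℤ_[p]) (k + d) (g + e * q) = coeff (R := ℤ_[p]) k q := by
    intro k
    have t1 : Filter.Tendsto (fun n => coeff (R := ℤ_[p]) k (Qs (n + 1)))
        Filter.atTop (nhds (coeff (R := ℤ_[p]) k q)) :=
      (htend k).comp (Filter.tendsto_add_atTop_nat 1)
    have t2 : Filter.Tendsto (fun n => coeff (R := ℤ_[p]) k (Qs (n + 1)))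
        Filter.atTop (nhds (coeff (R := ℤ_[p]) (k + d) (g + e * q))) := by
      have heq : ∀ n, coeff (R := ℤ_[p]) k (Qs (n + 1)) =
          coeff (R := ℤ_[p]) (k + d) g +
            ∑ x ∈ Finset.HasAntidiagonal.antidiagonal (k + d), coeff (R := ℤ_[p]) x.1 e * coeff (R := ℤ_[p]) x.2 (Qs n) := by
        intro n
        rw [hQs, map_add, PowerSeries.coeff_mul]
      simp only [heq]
      rw [map_add, PowerSeries.coeff_mul]
      exact Filter.Tendsto.const_add _
        (tendsto_finset_sum _ fun x _ => ((htend x.2).const_mul _))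
    exact tendsto_nhds_unique t2 t1
  refine ⟨q, fun m hm => ?_⟩
  obtain ⟨k, rfl⟩ : ∃ k, m = k + d := ⟨m - d, by omega⟩
  have hfe : (↑f : PowerSeries ℤ_[p]) = PowerSeries.X ^ d - e := by
    rw [hedef]
    push_cast
    ring
  rw [hfe, mul_sub, map_sub, map_sub, PowerSeries.coeff_mul_X_pow]
  have := hfix k
  rw [map_add] at this
  have hcomm : coeff (R := ℤ_[p]) (k + d) (e * q) = coeff (R := ℤ_[p]) (k + d) (q * e) := by
    rw [mul_comm]
  rw [← this, hcomm]
  ring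

end Stmt6Aux

/-- If `f ∈ ℤ_p[X]` is a distinguished polynomial of degree `d ≥ 1` (monic, with all
lower coefficients divisible by `p`), then `ℤ_p⟦X⟧ ⧸ (f)` is free of rank `d` over `ℤ_p`. -/
theorem stmt_6 (p : ℕ) [Fact p.Prime] (d : ℕ) (hd : 1 ≤ d)
    (f : Polynomial ℤ_[p]) (hmonic : f.Monic) (hdeg : f.natDegree = d)
    (hdist : ∀ i < d, (p : ℤ_[p]) ∣ f.coeff i) :
    Nonempty (Module.Basis (Fin d) ℤ_[p]
      (PowerSeries ℤ_[p] ⧸ Ideal.span {(f : PowerSeries ℤ_[p])})) := by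
  classical
  set I : Ideal (PowerSeries ℤ_[p]) := Ideal.span {(f : PowerSeries ℤ_[p])} with hIdef
  let πl : PowerSeries ℤ_[p] →ₗ[ℤ_[p]] (PowerSeries ℤ_[p] ⧸ I) :=
    (Ideal.Quotient.mkₐ ℤ_[p] I).toLinearMap
  -- coefficient formula for low-degree combinations
  have hPcoeff : ∀ (a : Fin d → ℤ_[p]) (m : ℕ),
      PowerSeries.coeff (R := ℤ_[p]) m (∑ i : Fin d, a i • (PowerSeries.X : PowerSeries ℤ_[p]) ^ (i : ℕ))
        = if h : m < d then a ⟨m, h⟩ else 0 := by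
    intro a m
    rw [map_sum]
    simp only [PowerSeries.coeff_smul, PowerSeries.coeff_X_pow, smul_eq_mul, mul_ite,
      mul_one, mul_zero]
    by_cases h : m < d
    · rw [dif_pos h]
      rw [Finset.sum_eq_single (⟨m, h⟩ : Fin d)]
      · simp
      · intro b _ hb
        rw [if_neg]
        intro hmb
        exact hb (by ext; simp [← hmb])
      · intro habs; exact absurd (Finset.mem_univ _) habs
    · rw [dif_neg h]
      refine Finset.sum_eq_zero fun i _ => ?_
      rw [if_neg]
      intro hmi
      have := i.isLt
      omega
  let L : (Fin d → ℤ_[p]) →ₗ[ℤ_[p]] (PowerSeries ℤ_[p] ⧸ I) :=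
    { toFun := fun a => πl (∑ i : Fin d, a i • (PowerSeries.X : PowerSeries ℤ_[p]) ^ (i : ℕ))
      map_add' := by
        intro a b
        simp only [Pi.add_apply, add_smul, Finset.sum_add_distrib, map_add]
      map_smul' := by
        intro c a
        simp only [Pi.smul_apply, smul_eq_mul, ← smul_smul, ← Finset.smul_sum, map_smul,
          RingHom.id_apply] }
  have hLapp : ∀ a : Fin d → ℤ_[p],
      L a = πl (∑ i : Fin d, a i • (PowerSeries.X : PowerSeries ℤ_[p]) ^ (i : ℕ)) :=
    fun a => rfl
  have hπ : ∀ x : PowerSeries ℤ_[p], πl x = Ideal.Quotient.mk I x := fun x => rfl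
  have hLinj : Function.Injective L := by
    rw [← LinearMap.ker_eq_bot, LinearMap.ker_eq_bot']
    intro a ha
    rw [hLapp, hπ, Ideal.Quotient.eq_zero_iff_mem] at ha
    obtain ⟨q, hqf⟩ := Ideal.mem_span_singleton'.mp ha
    have hqzero : q = 0 := by
      refine Stmt6Aux.unique_zero hmonic hdeg hdist q fun m hm => ?_
      rw [hqf, hPcoeff, dif_neg (by omega : ¬ m < d)]
    rw [hqzero, zero_mul] at hqf
    funext i
    have h2 := hPcoeff a (i : ℕ)
    rw [← hqf, map_zero] at h2
    have h3 := h2.symm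
    rw [dif_pos i.isLt] at h3
    simpa using h3
  have hLsurj : Function.Surjective L := by
    intro y
    obtain ⟨g, rfl⟩ := Ideal.Quotient.mk_surjective y
    obtain ⟨q, hq⟩ := Stmt6Aux.weier_div hmonic hdeg hdist g
    set r : PowerSeries ℤ_[p] := g - q * ↑f with hrdef
    refine ⟨fun i => PowerSeries.coeff (R := ℤ_[p]) (i : ℕ) r, ?_⟩
    have hsum : (∑ i : Fin d, PowerSeries.coeff (R := ℤ_[p]) (i : ℕ) r •
        (PowerSeries.X : PowerSeries ℤ_[p]) ^ (i : ℕ)) = r := by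
      ext m
      rw [hPcoeff]
      by_cases h : m < d
      · rw [dif_pos h]
      · rw [dif_neg h]
        exact (hq m (le_of_not_gt h)).symm
    rw [hLapp, hsum, hπ]
    rw [Ideal.Quotient.eq]
    have : r - g = -(q * ↑f) := by rw [hrdef]; ring
    rw [this]
    exact neg_mem (Ideal.mem_span_singleton'.mpr ⟨q, rfl⟩)
  exact ⟨(Pi.basisFun ℤ_[p] (Fin d)).map (LinearEquiv.ofBijective L ⟨hLinj, hLsurj⟩)⟩
end
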